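/- The map c ↦ SER^∞(c) = (αc/(2β√π)) γ(3/2, β/c) + (α/2) erfc(√(β/c)) is strictly increasing on (0, ∞). -/

import Mathlib

open Real

/-- Lower incomplete gamma function `γ(p, x) = ∫₀^x t^{p-1} e^{-t} dt`. -/
noncomputable def lowerGamma (p x : ℝ) : ℝ :=
  ∫ t in (0:ℝ)..x, t ^ (p - 1) * Real.exp (-t)

/-- Complementary error function `erfc(x) = (2/√π) ∫ₓ^∞ e^{-t²} dt`. -/
noncomputable def erfc (x : ℝ) : ℝ :=
  2 / Real.sqrt Real.pi * ∫ t in Set.Ioi x, Real.exp (-t ^ 2)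

section aux

open MeasureTheory intervalIntegral

lemma gauss_integrable : Integrable (fun t : ℝ => Real.exp (-t ^ 2)) := by
  have := integrable_exp_neg_mul_sq (b := 1) one_pos
  simpa using this

lemma erfc_eq (x : ℝ) :
    erfc x = erfc 0 - 2 / Real.sqrt Real.pi * ∫ t in (0:ℝ)..x, Real.exp (-t ^ 2) := by
  have hI := gauss_integrable
  have key : ∀ a : ℝ, (∫ t in Set.Iic a, Real.exp (-t ^ 2)) +
      (∫ t in Set.Ioi a, Real.exp (-t ^ 2)) = ∫ t : ℝ, Real.exp (-t ^ 2) := by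
    intro a
    have := MeasureTheory.integral_add_compl (measurableSet_Iic (a := a)) hI
    simpa [Set.compl_Iic] using this
  have hsub : (∫ t in Set.Iic x, Real.exp (-t ^ 2)) -
      (∫ t in Set.Iic (0:ℝ), Real.exp (-t ^ 2)) = ∫ t in (0:ℝ)..x, Real.exp (-t ^ 2) :=
    integral_Iic_sub_Iic (hI.integrableOn) (hI.integrableOn)
  have h0 := key 0
  have hx := key x
  unfold erfc
  linear_combination (2 / Real.sqrt Real.pi) * (hx - h0 - hsub)

lemma hasDerivAt_erfc (x : ℝ) :
    HasDerivAt erfc (-(2 / Real.sqrt Real.pi * Real.exp (-x ^ 2))) x := by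
  have hc : Continuous fun t : ℝ => Real.exp (-t ^ 2) := by continuity
  have hF : HasDerivAt (fun u => ∫ t in (0:ℝ)..u, Real.exp (-t ^ 2))
      (Real.exp (-x ^ 2)) x :=
    integral_hasDerivAt_right (hc.intervalIntegrable 0 x)
      (hc.stronglyMeasurableAtFilter _ _) hc.continuousAt
  have : HasDerivAt (fun u : ℝ =>
      erfc 0 - 2 / Real.sqrt Real.pi * ∫ t in (0:ℝ)..u, Real.exp (-t ^ 2))
      (-(2 / Real.sqrt Real.pi * Real.exp (-x ^ 2))) x := by
    simpa using ((hF.const_mul (2 / Real.sqrt Real.pi)).const_sub (erfc 0))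
  exact this.congr_of_eventuallyEq (Filter.Eventually.of_forall fun u => erfc_eq u)

lemma integrand_continuous : Continuous (fun t : ℝ => t ^ ((3:ℝ)/2 - 1) * Real.exp (-t)) := by
  have h1 : Continuous fun t : ℝ => t ^ ((3:ℝ)/2 - 1) := by
    rw [continuous_iff_continuousAt]
    intro t
    exact Real.continuousAt_rpow_const t _ (Or.inr (by norm_num))
  exact h1.mul (by continuity)

lemma hasDerivAt_lowerGamma {u : ℝ} (hu : 0 < u) :
    HasDerivAt (lowerGamma (3/2)) (Real.sqrt u * Real.exp (-u)) u := by
  have hc := integrand_continuous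
  have hF : HasDerivAt (fun v => ∫ t in (0:ℝ)..v, t ^ ((3:ℝ)/2 - 1) * Real.exp (-t))
      (u ^ ((3:ℝ)/2 - 1) * Real.exp (-u)) u :=
    intervalIntegral.integral_hasDerivAt_right (hc.intervalIntegrable 0 u)
      (hc.stronglyMeasurableAtFilter _ _) hc.continuousAt
  have hE : u ^ ((3:ℝ)/2 - 1) = Real.sqrt u := by
    rw [Real.sqrt_eq_rpow]; norm_num
  rw [hE] at hF
  exact hF

lemma lowerGamma_pos {u : ℝ} (hu : 0 < u) : 0 < lowerGamma (3/2) u := by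
  apply intervalIntegral.intervalIntegral_pos_of_pos_on
    (integrand_continuous.intervalIntegrable 0 u)
  · intro t ht
    have ht0 : 0 < t := ht.1
    exact mul_pos (Real.rpow_pos_of_pos ht0 _) (Real.exp_pos _)
  · exact hu

end aux

lemma hasDerivAt_ser (α β : ℝ) (hβ : 0 < β) {c : ℝ} (hc : 0 < c) :
    HasDerivAt (fun c : ℝ =>
        α * c / (2 * β * Real.sqrt Real.pi) * lowerGamma (3 / 2) (β / c) +
          α / 2 * erfc (Real.sqrt (β / c)))
      (α / (2 * β * Real.sqrt Real.pi) * lowerGamma (3 / 2) (β / c)) c := by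
  have hπ : 0 < Real.sqrt Real.pi := Real.sqrt_pos.mpr Real.pi_pos
  set u := β / c with hu_def
  have hu : 0 < u := div_pos hβ hc
  have hs : 0 < Real.sqrt u := Real.sqrt_pos.mpr hu
  have hs2 : Real.sqrt u ^ 2 = u := Real.sq_sqrt hu.le
  -- derivative of c ↦ β/c
  have h1 : HasDerivAt (fun c : ℝ => β / c) (-(β / c ^ 2)) c := by
    have := (hasDerivAt_inv hc.ne').const_mul β
    simpa [div_eq_mul_inv, mul_comm, neg_div] using this
  -- derivative of c ↦ lowerGamma (3/2) (β/c)
  have h2 : HasDerivAt (fun c : ℝ => lowerGamma (3/2) (β / c))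
      (Real.sqrt u * Real.exp (-u) * -(β / c ^ 2)) c := by
    have := (hasDerivAt_lowerGamma hu).comp c h1; exact this
  -- derivative of c ↦ √(β/c)
  have h3 : HasDerivAt (fun c : ℝ => Real.sqrt (β / c))
      (1 / (2 * Real.sqrt u) * -(β / c ^ 2)) c :=
    (Real.hasDerivAt_sqrt hu.ne').comp c h1
  -- derivative of c ↦ erfc (√(β/c))
  have h4 : HasDerivAt (fun c : ℝ => erfc (Real.sqrt (β / c)))
      (-(2 / Real.sqrt Real.pi * Real.exp (-u)) * (1 / (2 * Real.sqrt u) * -(β / c ^ 2))) c := by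
    have := (hasDerivAt_erfc (Real.sqrt u)).comp c h3
    simp only [hs2] at this; exact this
  -- derivative of c ↦ α c /(2β√π) * γ
  have h5 : HasDerivAt (fun c : ℝ => α * c / (2 * β * Real.sqrt Real.pi) * lowerGamma (3/2) (β / c))
      ((α / (2 * β * Real.sqrt Real.pi)) * lowerGamma (3/2) u +
        (α * c / (2 * β * Real.sqrt Real.pi)) * (Real.sqrt u * Real.exp (-u) * -(β / c ^ 2))) c := by
    have hid : HasDerivAt (fun c : ℝ => α * c / (2 * β * Real.sqrt Real.pi))
        (α / (2 * β * Real.sqrt Real.pi)) c := by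
      have := (hasDerivAt_id c).const_mul α
      simpa [mul_div_assoc] using (this.div_const (2 * β * Real.sqrt Real.pi))
    exact hid.mul h2
  have h6 := h5.add ((h4.const_mul (α / 2)))
  refine h6.congr_deriv (Eq.symm ?_)
  have hππ : Real.sqrt Real.pi ≠ 0 := hπ.ne'
  have hss : Real.sqrt u ≠ 0 := hs.ne'
  have hmul : Real.sqrt u * Real.sqrt u = β / c := by
    rw [Real.mul_self_sqrt hu.le]
  have hcu : Real.sqrt u ^ 2 * c = β := by
    rw [hs2, hu_def]; field_simp
  field_simp
  linear_combination (α * β * Real.exp (-(β / c))) * hcu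

/-- The asymptotic SER
`c ↦ (αc/(2β√π)) γ(3/2, β/c) + (α/2) erfc(√(β/c))` is strictly increasing on
`(0, ∞)`. -/
theorem asymptotic_ser_strictMono (α β : ℝ) (hα : 0 < α) (hβ : 0 < β) :
    StrictMonoOn (fun c : ℝ =>
        α * c / (2 * β * Real.sqrt Real.pi) * lowerGamma (3 / 2) (β / c) +
          α / 2 * erfc (Real.sqrt (β / c)))
      (Set.Ioi 0) := by
  apply strictMonoOn_of_deriv_pos (convex_Ioi 0)
  · intro c hc
    exact ((hasDerivAt_ser α β hβ hc).continuousAt).continuousWithinAt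
  · intro c hc
    rw [interior_Ioi] at hc
    rw [(hasDerivAt_ser α β hβ hc).deriv]
    have hπ : 0 < Real.sqrt Real.pi := Real.sqrt_pos.mpr Real.pi_pos
    exact mul_pos (div_pos hα (by positivity)) (lowerGamma_pos (div_pos hβ hc))
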